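/- arXiv:math/0308274 — 5 statements merged into one kernel-verified Lean document; each statement's English description precedes it below -/
import Mathlib

section
/- Let G act freely by isometries on a CAT(0) space X, and suppose a, b ∈ G satisfy a b a⁻¹ = bᵐ with |m| ≥ 2. If b acts as a semi-simple isometry (its displacement function attains its infimum), then the translation length of b is zero, and hence b must act as a parabolic isometry. -/
set_option maxHeartbeats 1000000


/-- A map `γ` is a unit-speed geodesic on the interval `[s₀, s₁]`. -/
def UnitSpeedOn {X : Type*} [MetricSpace X] (γ : ℝ → X) (s₀ s₁ : ℝ) : Prop :=
  ∀ s ∈ Set.Icc s₀ s₁, ∀ t ∈ Set.Icc s₀ s₁, dist (γ s) (γ t) = |s - t|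

/-- `X` is a CAT(0) space: it is geodesic and satisfies the CN (comparison)
inequality of Bruhat–Tits. -/
def IsCAT0 (X : Type*) [MetricSpace X] : Prop :=
  (∀ x y : X, ∃ γ : ℝ → X, γ 0 = x ∧ γ (dist x y) = y ∧ UnitSpeedOn γ 0 (dist x y)) ∧
  ∀ x y z m : X, dist y m = dist y z / 2 → dist m z = dist y z / 2 →
    dist x m ^ 2 ≤ (dist x y ^ 2 + dist x z ^ 2) / 2 - dist y z ^ 2 / 4

/-- If a group acts freely by isometries on a complete CAT(0) space and
`a * b * a⁻¹ = b ^ m` with `|m| ≥ 2` and `b ≠ 1`, then if `b` were semi-simple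
its translation length would be zero; hence `b` acts as a parabolic isometry
(its displacement function does not attain its infimum). -/
theorem stmt_11 {G X : Type*} [Group G] [MetricSpace X] [CompleteSpace X]
    [MulAction G X] (hX : IsCAT0 X)
    (hiso : ∀ g : G, Isometry fun x : X => g • x)
    (hfree : ∀ (g : G) (x : X), g • x = x → g = 1)
    (a b : G) (m : ℤ) (hm : 2 ≤ |m|) (hb : b ≠ 1)
    (hrel : a * b * a⁻¹ = b ^ m) :
    (∀ x : X, (∀ y : X, dist x (b • x) ≤ dist y (b • y)) → dist x (b • x) = 0) ∧
    ¬ ∃ x : X, ∀ y : X, dist x (b • x) ≤ dist y (b • y) := by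
  have hdist : ∀ (g : G) (p q : X), dist (g • p) (g • q) = dist p q :=
    fun g p q => (hiso g).dist_eq p q
  have main : ∀ x : X, (∀ y : X, dist x (b • x) ≤ dist y (b • y)) → dist x (b • x) = 0 := by
    intro x hx
    obtain ⟨γ, hγ0, hγ1, hγu⟩ := hX.1 x (b • x)
    set L := dist x (b • x) with hLdef
    have hL0 : 0 ≤ L := dist_nonneg
    set mid := γ (L / 2) with hmid
    have h0mem : (0:ℝ) ∈ Set.Icc (0:ℝ) L := ⟨le_refl _, hL0⟩
    have hhalfmem : L / 2 ∈ Set.Icc (0:ℝ) L := ⟨by linarith, by linarith⟩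
    have hLmem : L ∈ Set.Icc (0:ℝ) L := ⟨hL0, le_refl _⟩
    have dxm : dist x mid = L / 2 := by
      have h := hγu 0 h0mem (L/2) hhalfmem
      rw [hγ0] at h
      rw [h, abs_of_nonpos (by linarith)]; ring
    have dmb : dist mid (b • x) = L / 2 := by
      have h := hγu (L/2) hhalfmem L hLmem
      rw [hγ1] at h
      rw [h, abs_of_nonpos (by linarith)]; ring
    have dmbm : dist mid (b • mid) = L := by
      have h1 : dist mid (b • mid) ≤ L := by
        calc dist mid (b • mid) ≤ dist mid (b • x) + dist (b • x) (b • mid) :=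
              dist_triangle _ _ _
          _ = L / 2 + dist x mid := by rw [dmb, hdist]
          _ = L := by rw [dxm]; ring
      have h2 : L ≤ dist mid (b • mid) := hx mid
      linarith
    have key : ∀ k : ℕ, dist x ((b ^ k) • x) = k * L ∧
        dist x ((b ^ k) • mid) = (k + 1/2) * L := by
      intro k
      induction k with
      | zero =>
        constructor
        · rw [pow_zero, one_smul, dist_self]; simp
        · rw [pow_zero, one_smul, dxm]; push_cast; ring
      | succ k ih =>
        obtain ⟨hu, hv⟩ := ih
        have e1 : (b ^ (k+1)) • x = (b ^ k) • (b • x) := by rw [pow_succ, mul_smul]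
        have e2 : (b ^ (k+1)) • mid = (b ^ k) • (b • mid) := by rw [pow_succ, mul_smul]
        have d1 : dist ((b ^ k) • x) ((b ^ k) • mid) = L / 2 := by rw [hdist, dxm]
        have d3 : dist ((b ^ k) • x) ((b ^ (k+1)) • x) = L := by rw [e1, hdist]
        have d2 : dist ((b ^ k) • mid) ((b ^ (k+1)) • x) = L / 2 := by rw [e1, hdist, dmb]
        have cn1 := hX.2 x ((b ^ k) • x) ((b ^ (k+1)) • x) ((b ^ k) • mid)
          (by rw [d1, d3]) (by rw [d2, d3])
        rw [hu, hv, d3] at cn1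
        have tri1 : dist x ((b ^ (k+1)) • x) ≤ ((k:ℝ) + 1) * L := by
          have h := dist_triangle x ((b ^ k) • x) ((b ^ (k+1)) • x)
          rw [hu, d3] at h; linarith
        have hA0 : 0 ≤ dist x ((b ^ (k+1)) • x) := dist_nonneg
        have hk0 : (0:ℝ) ≤ (k:ℝ) := Nat.cast_nonneg k
        have hu1 : dist x ((b ^ (k+1)) • x) = ((k:ℝ) + 1) * L := by
          have hge : ((k:ℝ) + 1) * L ≤ dist x ((b ^ (k+1)) • x) := by
            nlinarith [cn1, tri1, hA0, hL0, hk0]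
          linarith
        have d4 : dist ((b ^ k) • mid) ((b ^ (k+1)) • mid) = L := by rw [e2, hdist, dmbm]
        have d5 : dist ((b ^ (k+1)) • x) ((b ^ (k+1)) • mid) = L / 2 := by rw [hdist, dxm]
        have cn2 := hX.2 x ((b ^ k) • mid) ((b ^ (k+1)) • mid) ((b ^ (k+1)) • x)
          (by rw [d2, d4]) (by rw [d5, d4])
        rw [hu1, hv, d4] at cn2
        have tri2 : dist x ((b ^ (k+1)) • mid) ≤ ((k:ℝ) + 1/2) * L + L := by
          have h := dist_triangle x ((b ^ k) • mid) ((b ^ (k+1)) • mid)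
          rw [hv, d4] at h; linarith
        have hB0 : 0 ≤ dist x ((b ^ (k+1)) • mid) := dist_nonneg
        have hv1 : dist x ((b ^ (k+1)) • mid) = ((k:ℝ) + 3/2) * L := by
          have hge : ((k:ℝ) + 3/2) * L ≤ dist x ((b ^ (k+1)) • mid) := by
            nlinarith [cn2, tri2, hB0, hL0, hk0]
          linarith
        constructor
        · rw [hu1]; push_cast; ring
        · rw [hv1]; push_cast; ring
    have hinv : ∀ g : G, dist x (g⁻¹ • x) = dist x (g • x) := by
      intro g
      conv_lhs => rw [← hdist g x (g⁻¹ • x), smul_inv_smul, dist_comm]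
    have keyz : ∀ n : ℤ, dist x ((b ^ n) • x) = (n.natAbs : ℝ) * L := by
      intro n
      rcases Int.natAbs_eq n with h | h
      · conv_lhs => rw [h]
        rw [zpow_natCast]; exact (key n.natAbs).1
      · conv_lhs => rw [h]
        rw [zpow_neg, zpow_natCast, hinv]; exact (key n.natAbs).1
    have hconj : ∀ k : ℕ, a * b ^ k * a⁻¹ = b ^ (m * (k:ℤ)) := by
      intro k
      rw [← conj_pow, hrel, ← zpow_natCast (b ^ m) k, ← zpow_mul]
    have hbound : ∀ k : ℕ, (k:ℝ) * L ≤ 2 * dist x (a • x) := by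
      intro k
      have e : (b ^ (m * (k:ℤ))) • (a • x) = a • ((b ^ k) • x) := by
        rw [← hconj k, mul_smul, mul_smul, inv_smul_smul]
      have d6 : dist (a • x) ((b ^ (m * (k:ℤ))) • (a • x)) = (k:ℝ) * L := by
        rw [e, hdist]; exact (key k).1
      have tri := dist_triangle4 x (a • x) ((b ^ (m * (k:ℤ))) • (a • x))
        ((b ^ (m * (k:ℤ))) • x)
      have d7 : dist ((b ^ (m * (k:ℤ))) • (a • x)) ((b ^ (m * (k:ℤ))) • x)
          = dist x (a • x) := by rw [hdist, dist_comm]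
      rw [keyz, d6, d7] at tri
      have habs : (2:ℝ) * ((k:ℝ) * L) ≤ ((m * (k:ℤ)).natAbs : ℝ) * L := by
        have hna : (m * (k:ℤ)).natAbs = m.natAbs * k := Int.natAbs_mul m k
        have h2 : (2:ℝ) ≤ (m.natAbs : ℝ) := by
          have : (2:ℤ) ≤ (m.natAbs : ℤ) := by rwa [← Int.abs_eq_natAbs]
          exact_mod_cast this
        rw [hna]
        push_cast
        have h3 : (0:ℝ) ≤ (k:ℝ) * L := mul_nonneg (Nat.cast_nonneg k) hL0
        nlinarith [mul_le_mul_of_nonneg_right h2 h3]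
      linarith
    by_contra hne
    have hLpos : 0 < L := lt_of_le_of_ne hL0 (Ne.symm hne)
    obtain ⟨k, hk⟩ := exists_nat_gt (2 * dist x (a • x) / L)
    have h1 := hbound k
    have h2 : 2 * dist x (a • x) < (k:ℝ) * L := by
      rwa [div_lt_iff₀ hLpos] at hk
    linarith
  refine ⟨main, ?_⟩
  rintro ⟨x, hx⟩
  have h0 := main x hx
  have hbx : b • x = x := (dist_eq_zero.mp h0).symm
  exact hb (hfree b x hbx)
end

section
/- For every integer m with |m| ≥ 2, the homomorphism φ: BS(1,m) → SL(2,ℝ) with φ(a) = [[√|m|,0],[0,1/√|m|]] and φ(b) = [[1,1],[0,1]] is injective; equivalently, BS(1,m) acts freely on the hyperbolic plane ℍ² via φ composed with the action of PSL(2,ℝ). -/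
/-!
Using `a b = bᵐ a` to move powers of `b` to the left of powers of `a`, every element
of `BS(1,m)` can be written as `a⁻ⁱ bᵏ aʲ` with `i j : ℕ`, `k : ℤ`. With `s = √|m|`, its image
under `φ` is `[[s^(j-i), k s^(-i-j)], [0, s^(i-j)]]`, which is the identity only if `k = 0` and,
as `s > 1`, `i = j`; then the word itself is `1`.
-/

/-- The defining relator of the Baumslag–Solitar group `BS(1,m)`, with
generators `true ↦ a`, `false ↦ b`. -/
def bsRel (m : ℤ) : Set (FreeGroup Bool) :=
  {FreeGroup.of true * FreeGroup.of false * (FreeGroup.of true)⁻¹ *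
    (FreeGroup.of false ^ m)⁻¹}

/-- The Baumslag–Solitar group `BS(1,m) = ⟨a, b | a b a⁻¹ = bᵐ⟩`. -/
abbrev BS (m : ℤ) := PresentedGroup (bsRel m)

open MatrixGroups

section NormalForm

variable {G : Type*} [Group G] {a b : G} {m : ℤ}

theorem SemiconjBy.pow_left_zpow_right (h : SemiconjBy a b (b ^ m)) (n : ℕ) (k : ℤ) :
    SemiconjBy (a ^ n) (b ^ k) (b ^ (m ^ n * k)) := by
  induction n generalizing k with
  | zero => simp
  | succ n ih =>
    rw [pow_succ', pow_succ', mul_assoc]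
    have hstep : SemiconjBy a (b ^ (m ^ n * k)) (b ^ (m * (m ^ n * k))) := by
      simpa only [zpow_mul] using h.zpow_right (m ^ n * k)
    exact hstep.mul_left (ih k)

theorem zpow_mul_inv_pow_mul_zpow_mul_pow (h : SemiconjBy a b (b ^ m)) (l k : ℤ) (i j : ℕ) :
    b ^ l * ((a ^ i)⁻¹ * b ^ k * a ^ j) = (a ^ i)⁻¹ * b ^ (m ^ i * l + k) * a ^ j := by
  have hc : a ^ i * b ^ l * (a ^ i)⁻¹ = b ^ (m ^ i * l) :=
    (h.pow_left_zpow_right i l).eq ▸ by group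
  rw [zpow_add, ← hc]
  group

theorem exists_eq_inv_pow_mul_zpow_mul_pow (h : SemiconjBy a b (b ^ m)) {g : G}
    (hg : g ∈ Subgroup.closure {a, b}) :
    ∃ (i j : ℕ) (k : ℤ), g = (a ^ i)⁻¹ * b ^ k * a ^ j := by
  induction hg using Subgroup.closure_induction_left with
  | one => exact ⟨0, 0, 0, by simp⟩
  | mul_left x hx y _ ih =>
    obtain ⟨i, j, k, rfl⟩ := ih
    rcases hx with rfl | rfl
    · cases i with
      | zero =>
        exact ⟨0, j + 1, m * k, by simp [pow_succ', ← mul_assoc, (h.zpow_right k).eq, zpow_mul]⟩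
      | succ i => exact ⟨i, j, k, by rw [pow_succ']; group⟩
    · exact ⟨i, j, m ^ i * 1 + k, by
        rw [← zpow_mul_inv_pow_mul_zpow_mul_pow h, zpow_one]⟩
  | inv_mul_cancel x hx y _ ih =>
    obtain ⟨i, j, k, rfl⟩ := ih
    rcases hx with rfl | rfl
    · exact ⟨i + 1, j, k, by rw [pow_succ]; group⟩
    · exact ⟨i, j, m ^ i * (-1) + k, by
        rw [← zpow_mul_inv_pow_mul_zpow_mul_pow h, zpow_neg_one]⟩

end NormalForm

namespace BS

variable {m : ℤ}

theorem semiconjBy_of : SemiconjBy (PresentedGroup.of true : BS m) (PresentedGroup.of false)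
    (PresentedGroup.of false ^ m) := by
  have hrel := PresentedGroup.mk_eq_mk_of_mul_inv_mem (rels := bsRel m) (Set.mem_singleton _)
  simp only [map_mul, map_inv, map_zpow] at hrel
  exact mul_inv_eq_iff_eq_mul.mp hrel

theorem closure_of_eq_top :
    Subgroup.closure {(PresentedGroup.of true : BS m), PresentedGroup.of false} = ⊤ := by
  rw [← PresentedGroup.closure_range_of]
  congr
  ext x
  simp [or_comm]

theorem exists_eq_inv_pow_mul_zpow_mul_pow (g : BS m) :
    ∃ (i j : ℕ) (k : ℤ), g = (PresentedGroup.of true ^ i)⁻¹ * PresentedGroup.of false ^ k *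
      PresentedGroup.of true ^ j :=
  _root_.exists_eq_inv_pow_mul_zpow_mul_pow semiconjBy_of (closure_of_eq_top ▸ Subgroup.mem_top g)

end BS

namespace Matrix.SpecialLinearGroup

section CommRing

variable {R : Type*} [CommRing R]

theorem coe_zpow_of_coe_eq_unipotent {x : SL(2, R)}
    (hx : (x : Matrix (Fin 2) (Fin 2) R) = !![1, 1; 0, 1]) (k : ℤ) :
    ((x ^ k : SL(2, R)) : Matrix (Fin 2) (Fin 2) R) = !![1, (k : R); 0, 1] := by
  have hT : x = map (Int.castRingHom R) ModularGroup.T := by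
    ext i j; fin_cases i <;> fin_cases j <;> simp [hx]
  rw [hT, ← map_zpow, map_apply_coe, ModularGroup.coe_T_zpow]
  ext i j; fin_cases i <;> fin_cases j <;> simp

theorem coe_pow_of_coe_eq_diagonal {x : SL(2, R)} {s t : R}
    (hx : (x : Matrix (Fin 2) (Fin 2) R) = !![s, 0; 0, t]) (n : ℕ) :
    ((x ^ n : SL(2, R)) : Matrix (Fin 2) (Fin 2) R) = !![s ^ n, 0; 0, t ^ n] := by
  have hd : !![s, 0; 0, t] = diagonal ![s, t] := by
    ext i j; fin_cases i <;> fin_cases j <;> simp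
  rw [coe_pow, hx, hd, diagonal_pow]
  ext i j; fin_cases i <;> fin_cases j <;> simp

end CommRing

section OrderedField

variable {K : Type*} [Field K] [LinearOrder K] [IsStrictOrderedRing K]

theorem eq_zero_and_eq_of_zpow_mul_pow_eq_pow {x y : SL(2, K)} {s : K} (hs : 1 < s)
    (hx : (x : Matrix (Fin 2) (Fin 2) K) = !![s, 0; 0, s⁻¹])
    (hy : (y : Matrix (Fin 2) (Fin 2) K) = !![1, 1; 0, 1]) {i j : ℕ} {k : ℤ}
    (h : y ^ k * x ^ j = x ^ i) : k = 0 ∧ i = j := by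
  have hmat := congrArg (fun z : SL(2, K) ↦ (z : Matrix (Fin 2) (Fin 2) K)) h
  simp only [coe_mul, coe_zpow_of_coe_eq_unipotent hy, coe_pow_of_coe_eq_diagonal hx,
    mul_fin_two] at hmat
  have h01 : (k : K) * s⁻¹ ^ j = 0 := by simpa using congrFun (congrFun hmat 0) 1
  have h00 : s ^ j = s ^ i := by simpa using congrFun (congrFun hmat 0) 0
  refine ⟨?_, (pow_right_strictMono₀ hs).injective h00.symm⟩
  simpa [(zero_lt_one.trans hs).ne'] using h01

end OrderedField

end Matrix.SpecialLinearGroup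

/-- The homomorphism `BS(1,m) → SL(2,ℝ)` sending `a ↦ [[√|m|,0],[0,1/√|m|]]`
and `b ↦ [[1,1],[0,1]]` is injective, i.e. `BS(1,m)` acts freely on ℍ². -/
theorem stmt_13 (m : ℤ) (hm : 2 ≤ |m|)
    (φ : BS m →* Matrix.SpecialLinearGroup (Fin 2) ℝ)
    (ha : (φ (PresentedGroup.of true) : Matrix (Fin 2) (Fin 2) ℝ) =
      !![Real.sqrt |m|, 0; 0, (Real.sqrt |m|)⁻¹])
    (hb : (φ (PresentedGroup.of false) : Matrix (Fin 2) (Fin 2) ℝ) =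
      !![1, 1; 0, 1]) :
    Function.Injective φ := by
  have hs : 1 < Real.sqrt |m| := by
    rw [Real.lt_sqrt zero_le_one, one_pow]
    exact_mod_cast hm
  rw [injective_iff_map_eq_one]
  intro g hg
  obtain ⟨i, j, k, rfl⟩ := BS.exists_eq_inv_pow_mul_zpow_mul_pow g
  rw [map_mul, map_mul, map_inv, map_pow, map_zpow, map_pow, mul_assoc, inv_mul_eq_one] at hg
  obtain ⟨rfl, rfl⟩ :=
    Matrix.SpecialLinearGroup.eq_zero_and_eq_of_zpow_mul_pow_eq_pow hs ha hb hg.symm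
  simp
end

section
/- Let G be a group acting freely by isometries on a complete CAT(0) space X, and let g ∈ C(G) ∩ [G,G] be a non-trivial central element which is also a commutator product. Then g cannot be a hyperbolic isometry of X. -/
open Filter Topology

section Busemann

variable {X : Type*} [MetricSpace X] {σ : ℝ → X}

/-- Along a geodesic line `t ↦ d(x, σ t) - t` is antitone, so this infimum is its limit as
`t → ∞` (`tendsto_busemann`). -/
noncomputable def busemann (σ : ℝ → X) (x : X) : ℝ :=
  ⨅ t : ℝ, (dist x (σ t) - t)

lemma antitone_dist_sub (hσ : Isometry σ) (x : X) : Antitone fun t => dist x (σ t) - t := by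
  intro s t hst
  have h := dist_triangle x (σ s) (σ t)
  rw [hσ.dist_eq, Real.dist_eq, abs_sub_comm, abs_of_nonneg (sub_nonneg.2 hst)] at h
  dsimp only
  linarith

lemma bddBelow_dist_sub (hσ : Isometry σ) (x : X) :
    BddBelow (Set.range fun t => dist x (σ t) - t) := by
  refine ⟨-dist x (σ 0), ?_⟩
  rintro _ ⟨t, rfl⟩
  have h := dist_triangle (σ 0) x (σ t)
  rw [hσ.dist_eq, Real.dist_eq, zero_sub, abs_neg, dist_comm] at h
  dsimp only
  linarith [le_abs_self t]

lemma tendsto_busemann (hσ : Isometry σ) (x : X) :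
    Tendsto (fun t => dist x (σ t) - t) atTop (𝓝 (busemann σ x)) :=
  tendsto_atTop_ciInf (antitone_dist_sub hσ x) (bddBelow_dist_sub hσ x)

lemma busemann_le (hσ : Isometry σ) (x : X) (t : ℝ) : busemann σ x ≤ dist x (σ t) - t :=
  ciInf_le (bddBelow_dist_sub hσ x) t

lemma busemann_le_dist_add (hσ : Isometry σ) (x y : X) :
    busemann σ x ≤ dist x y + busemann σ y := by
  rw [← sub_le_iff_le_add']
  refine le_ciInf fun t => ?_
  linarith [busemann_le hσ x t, dist_triangle x y (σ t)]

lemma busemann_apply_self (hσ : Isometry σ) (t : ℝ) : busemann σ (σ t) = -t := by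
  refine le_antisymm ?_ (le_ciInf fun s => ?_)
  · simpa using busemann_le hσ (σ t) t
  · rw [hσ.dist_eq, Real.dist_eq]
    linarith [neg_abs_le (t - s)]

lemma busemann_comp {Ψ : X → X} (hΨ : Isometry Ψ) (σ : ℝ → X) (x : X) :
    busemann (fun t => Ψ (σ t)) (Ψ x) = busemann σ x := by
  simp only [busemann, hΨ.dist_eq]

end Busemann

section CAT0

variable {X : Type*} [MetricSpace X]

lemma IsCAT0.exists_midpoint (hX : IsCAT0 X) (x y : X) :
    ∃ m, dist x m = dist x y / 2 ∧ dist m y = dist x y / 2 := by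
  obtain ⟨ρ, hρ0, hρ1, hρ⟩ := hX.1 x y
  have hd : 0 ≤ dist x y := dist_nonneg
  have hmem : dist x y / 2 ∈ Set.Icc 0 (dist x y) := ⟨by linarith, by linarith⟩
  refine ⟨ρ (dist x y / 2), ?_, ?_⟩
  · have h := hρ 0 ⟨le_rfl, hd⟩ _ hmem
    rw [hρ0, abs_sub_comm, abs_of_nonneg (by linarith)] at h
    linarith
  · have h := hρ _ hmem _ ⟨hd, le_rfl⟩
    rw [hρ1, abs_of_nonpos (by linarith)] at h
    linarith

lemma IsCAT0.dist_add_dist_le (hX : IsCAT0 X) {p q r s : X} {T : ℝ} (hT : 0 < T)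
    (hpq : dist p q = T) (hrs : dist r s = T) :
    (dist r q - T) + (dist p s - T) ≤ (dist p r ^ 2 + dist q s ^ 2) / (2 * T) := by
  obtain ⟨m, hpm, hms⟩ := hX.exists_midpoint p s
  have hr := hX.2 r p s m hpm hms
  have hq := hX.2 q p s m hpm hms
  rw [dist_comm r p, hrs] at hr
  rw [dist_comm q p, hpq] at hq
  have hdiag : dist r q ^ 2 ≤ dist p r ^ 2 + dist q s ^ 2 + 2 * T ^ 2 - dist p s ^ 2 := by
    have htri : dist r q ≤ dist r m + dist q m := dist_comm m q ▸ dist_triangle r m q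
    nlinarith [sq_nonneg (dist r m - dist q m), dist_nonneg (x := r) (y := q)]
  rw [le_div_iff₀ (by positivity)]
  nlinarith [sq_nonneg (dist r q - T), sq_nonneg (dist p s - T)]

end CAT0

section Axis

variable {X : Type*} [MetricSpace X] {Φ : X → X} {a : ℝ} {σ τ υ : ℝ → X}

def IsAxis (Φ : X → X) (a : ℝ) (σ : ℝ → X) : Prop :=
  Isometry σ ∧ ∀ t, Φ (σ t) = σ (t + a)

lemma isometry_iterate (hΦ : Isometry Φ) (n : ℕ) : Isometry Φ^[n] := by
  induction n with
  | zero => exact isometry_id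
  | succ n ih => exact ih.comp hΦ

lemma IsAxis.iterate_apply (hσ : IsAxis Φ a σ) (n : ℕ) (t : ℝ) :
    Φ^[n] (σ t) = σ (t + n * a) := by
  induction n with
  | zero => simp
  | succ n ih =>
    rw [Function.iterate_succ_apply', ih, hσ.2]
    push_cast
    ring_nf

lemma IsAxis.busemann_apply (hΦ : Isometry Φ) (hσ : IsAxis Φ a σ) (x : X) :
    busemann σ (Φ x) = busemann σ x - a := by
  have h := (tendsto_busemann hσ.1 (Φ x)).comp (tendsto_atTop_add_const_right _ a tendsto_id)
  have hshift : (fun t => dist (Φ x) (σ t) - t) ∘ (fun t => id t + a) =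
      fun t => (dist x (σ t) - t) - a := by
    funext t
    simp only [Function.comp_apply, id, ← hσ.2, hΦ.dist_eq]
    ring
  rw [hshift] at h
  exact tendsto_nhds_unique h ((tendsto_busemann hσ.1 x).sub_const a)

lemma IsAxis.busemann_iterate_apply (hΦ : Isometry Φ) (hσ : IsAxis Φ a σ) (n : ℕ) (x : X) :
    busemann σ (Φ^[n] x) = busemann σ x - n * a := by
  induction n with
  | zero => simp
  | succ n ih =>
    rw [Function.iterate_succ_apply', hσ.busemann_apply hΦ, ih]
    push_cast
    ring

lemma IsAxis.busemann_le_busemann_add (hΦ : Isometry Φ) (hσ : IsAxis Φ a σ)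
    (hτ : IsAxis Φ a τ) (ha : 0 < a) (x : X) :
    busemann σ x ≤ busemann σ (τ 0) + busemann τ x := by
  have hna : Tendsto (fun n : ℕ => (n : ℝ) * a) atTop atTop :=
    tendsto_natCast_atTop_atTop.atTop_mul_const ha
  refine ge_of_tendsto' (((tendsto_busemann hτ.1 x).comp hna).const_add _) fun n => ?_
  have hshift : busemann σ (τ (n * a)) = busemann σ (τ 0) - n * a := by
    rw [← hσ.busemann_iterate_apply hΦ, hτ.iterate_apply, zero_add]
  have h := busemann_le_dist_add hσ.1 x (τ (n * a))
  simp only [Function.comp_apply]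
  linarith

lemma IsAxis.busemann_add_busemann_nonpos (hX : IsCAT0 X) (hΦ : Isometry Φ)
    (hσ : IsAxis Φ a σ) (hτ : IsAxis Φ a τ) (ha : 0 < a) :
    busemann σ (τ 0) + busemann τ (σ 0) ≤ 0 := by
  set c := dist (σ 0) (τ 0)
  have hna : Tendsto (fun n : ℕ => (n : ℝ) * a) atTop atTop :=
    tendsto_natCast_atTop_atTop.atTop_mul_const ha
  have hlim := ((tendsto_busemann hσ.1 (τ 0)).comp hna).add
    ((tendsto_busemann hτ.1 (σ 0)).comp hna)
  have hbound : Tendsto (fun n : ℕ => (c ^ 2 + c ^ 2) / (2 * (n * a))) atTop (𝓝 0) :=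
    tendsto_const_nhds.div_atTop (hna.const_mul_atTop two_pos)
  refine le_of_tendsto_of_tendsto hlim hbound (eventually_atTop.2 ⟨1, fun n hn => ?_⟩)
  have hT : 0 < (n : ℝ) * a := mul_pos (by exact_mod_cast hn) ha
  have hside {ρ : ℝ → X} (hρ : IsAxis Φ a ρ) : dist (ρ 0) (ρ (n * a)) = n * a := by
    rw [hρ.1.dist_eq, Real.dist_eq, zero_sub, abs_neg, abs_of_pos hT]
  have hfar : dist (σ (n * a)) (τ (n * a)) = c := by
    rw [← zero_add ((n : ℝ) * a), ← hσ.iterate_apply, ← hτ.iterate_apply,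
      (isometry_iterate hΦ n).dist_eq]
  have h := hX.dist_add_dist_le hT (hside hσ) (hside hτ)
  rw [hfar] at h
  exact h

lemma IsAxis.busemann_cocycle (hX : IsCAT0 X) (hΦ : Isometry Φ) (hσ : IsAxis Φ a σ)
    (hτ : IsAxis Φ a τ) (hυ : IsAxis Φ a υ) (ha : 0 < a) :
    busemann σ (υ 0) = busemann σ (τ 0) + busemann τ (υ 0) := by
  refine le_antisymm (hσ.busemann_le_busemann_add hΦ hτ ha _) ?_
  linarith [hσ.busemann_le_busemann_add hΦ hυ ha (τ 0),
    hτ.busemann_add_busemann_nonpos hX hΦ hυ ha]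

end Axis

section GroupAction

variable {G X : Type*} [Group G] [MetricSpace X] [MulAction G X] {g : G} {a : ℝ} {γ : ℝ → X}

lemma IsAxis.smul (hiso : ∀ h : G, Isometry fun x : X => h • x) (hgc : g ∈ Subgroup.center G)
    (hγ : IsAxis (fun x : X => g • x) a γ) (h : G) :
    IsAxis (fun x : X => g • x) a fun t => h • γ t := by
  refine ⟨(hiso h).comp hγ.1, fun t => ?_⟩
  show g • h • γ t = h • γ (t + a)
  rw [smul_smul, ← Subgroup.mem_center_iff.mp hgc h, mul_smul]
  exact congrArg (h • ·) (hγ.2 t)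

lemma IsAxis.busemann_smul_mul (hX : IsCAT0 X) (hiso : ∀ h : G, Isometry fun x : X => h • x)
    (hgc : g ∈ Subgroup.center G) (hγ : IsAxis (fun x : X => g • x) a γ) (ha : 0 < a)
    (h₁ h₂ : G) :
    busemann γ ((h₁ * h₂) • γ 0) = busemann γ (h₁ • γ 0) + busemann γ (h₂ • γ 0) := by
  rw [hγ.busemann_cocycle hX (hiso g) (hγ.smul hiso hgc h₁) (hγ.smul hiso hgc (h₁ * h₂)) ha,
    mul_smul]
  exact congrArg _ (busemann_comp (hiso h₁) γ (h₂ • γ 0))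

lemma IsAxis.busemann_smul_eq_zero_of_mem_commutator (hX : IsCAT0 X)
    (hiso : ∀ h : G, Isometry fun x : X => h • x) (hgc : g ∈ Subgroup.center G)
    (hγ : IsAxis (fun x : X => g • x) a γ) (ha : 0 < a) {h : G} (hh : h ∈ commutator G) :
    busemann γ (h • γ 0) = 0 := by
  let χ : G →* Multiplicative ℝ :=
    MonoidHom.mk' (fun h => Multiplicative.ofAdd (busemann γ (h • γ 0))) fun h₁ h₂ => by
      rw [hγ.busemann_smul_mul hX hiso hgc ha]
      rfl
  exact ofAdd_eq_one.mp (Abelianization.commutator_subset_ker χ hh)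

end GroupAction

theorem stmt_15_general {G X : Type*} [Group G] [MetricSpace X]
    [MulAction G X] (hX : IsCAT0 X)
    (hiso : ∀ g : G, Isometry fun x : X => g • x)
    (g : G) (hgc : g ∈ Subgroup.center G) (hgcomm : g ∈ commutator G) :
    ¬ ∃ (γ : ℝ → X) (a : ℝ), 0 < a ∧ (∀ s t : ℝ, dist (γ s) (γ t) = |s - t|) ∧
      ∀ t : ℝ, g • γ t = γ (t + a) := by
  rintro ⟨γ, a, ha, hγ, hax⟩
  have hγ : IsAxis (fun x : X => g • x) a γ :=
    ⟨Isometry.of_dist_eq fun s t => by rw [hγ, Real.dist_eq], hax⟩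
  have h := hγ.busemann_smul_eq_zero_of_mem_commutator hX hiso hgc ha hgcomm
  rw [hax, zero_add, busemann_apply_self hγ.1] at h
  linarith

/-- If a group acts freely by isometries on a complete CAT(0) space, then a
non-trivial element of the center lying in the commutator subgroup cannot act
as a hyperbolic isometry. -/
theorem stmt_15 {G X : Type*} [Group G] [MetricSpace X] [CompleteSpace X]
    [MulAction G X] (hX : IsCAT0 X)
    (hiso : ∀ g : G, Isometry fun x : X => g • x)
    (hfree : ∀ (g : G) (x : X), g • x = x → g = 1)
    (g : G) (hg : g ≠ 1) (hgc : g ∈ Subgroup.center G) (hgcomm : g ∈ commutator G) :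
    ¬ ∃ (γ : ℝ → X) (a : ℝ), 0 < a ∧ (∀ s t : ℝ, dist (γ s) (γ t) = |s - t|) ∧
      ∀ t : ℝ, g • γ t = γ (t + a) :=
  stmt_15_general hX hiso g hgc hgcomm
end

section
/- The inverse limit of an inverse system of compact Hausdorff spaces each of covering dimension at most d has covering dimension at most d. -/
/-!
Every open set `W ∋ x` of the limit `X` contains `π_j⁻¹ V` for an open `V ∋ x_j` of a single factor
`F j`, and by directedness `j` may be enlarged at will. By compactness of the limit one index `j`
serves a whole finite open cover `U`: the open sets `interior (kernImage π_j W)`, `W ∈ U`, cover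
the closed set `π_j(X)`. Together with its complement they form a finite open cover of `F j`, and
the pull-back along `π_j` of a refinement of order `≤ d + 1` refines `U` with the same order.
-/

/-- The covering dimension of `X` is at most `n`: every finite open cover has an
open refinement of order at most `n + 1`. -/
def CovDimLE (X : Type*) [TopologicalSpace X] (n : ℕ) : Prop :=
  ∀ U : Finset (Set X), (∀ W ∈ U, IsOpen W) → ⋃₀ (U : Set (Set X)) = Set.univ →
    ∃ V : Set (Set X), (∀ W ∈ V, IsOpen W) ∧ ⋃₀ V = Set.univ ∧
      (∀ W ∈ V, ∃ W' ∈ U, W ⊆ W') ∧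
      ∀ x : X, {W ∈ V | x ∈ W}.encard ≤ n + 1

open Set Filter Topology

theorem CovDimLE.of_subsingleton (X : Type*) [TopologicalSpace X] [Subsingleton X] (n : ℕ) :
    CovDimLE X n := by
  intro U hUo hUc
  refine ⟨U, hUo, hUc, fun W hW => ⟨W, hW, subset_rfl⟩, fun x => ?_⟩
  calc {W ∈ (U : Set (Set X)) | x ∈ W}.encard
      ≤ ({univ} : Set (Set X)).encard :=
        encard_mono fun W hW => Subsingleton.eq_univ_of_nonempty ⟨x, hW.2⟩
    _ = 1 := encard_singleton _
    _ ≤ n + 1 := le_add_self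

theorem mem_interior_kernImage_iff {X Y : Type*} [TopologicalSpace Y] {f : X → Y} {x : X}
    {s : Set X} : f x ∈ interior (kernImage f s) ↔ s ∈ comap f (𝓝 (f x)) := by
  rw [mem_interior_iff_mem_nhds, mem_comap']
  rfl

theorem CovDimLE.exists_refinement_of_kernImage {X Y : Type*} [TopologicalSpace X]
    [TopologicalSpace Y] {n : ℕ} (hY : CovDimLE Y n) {f : X → Y} (hf : Continuous f)
    (hrange : IsClosed (range f)) (U : Finset (Set X))
    (hfU : ∀ x, ∃ W ∈ U, f x ∈ interior (kernImage f W)) :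
    ∃ V : Set (Set X), (∀ W ∈ V, IsOpen W) ∧ ⋃₀ V = univ ∧
      (∀ W ∈ V, ∃ W' ∈ U, W ⊆ W') ∧ ∀ x : X, {W ∈ V | x ∈ W}.encard ≤ n + 1 := by
  classical
  set G : Finset (Set Y) := insert (range f)ᶜ (U.image fun W => interior (kernImage f W))
  have hGo : ∀ S ∈ G, IsOpen S := by
    simp only [G, Finset.forall_mem_insert, Finset.forall_mem_image]
    exact ⟨hrange.isOpen_compl, fun _ _ => isOpen_interior⟩
  have hGc : ⋃₀ (G : Set (Set Y)) = univ := by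
    refine eq_univ_of_forall fun y => ?_
    by_cases hy : y ∈ range f
    · obtain ⟨x, rfl⟩ := hy
      obtain ⟨W, hW, hxW⟩ := hfU x
      refine ⟨_, ?_, hxW⟩
      simp only [G, Finset.coe_insert, Finset.coe_image]
      exact .inr ⟨W, hW, rfl⟩
    · exact ⟨(range f)ᶜ, by simp [G], hy⟩
  obtain ⟨V', hV'o, hV'c, hV'G, hV'ord⟩ := hY G hGo hGc
  -- `∅` is dropped since it lies in a member of `U` only when `U` is nonempty.
  refine ⟨(preimage f '' V') \ {∅}, ?_, ?_, ?_, fun x => ?_⟩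
  · rintro _ ⟨⟨S, hS, rfl⟩, -⟩
    exact (hV'o S hS).preimage hf
  · refine eq_univ_of_forall fun x => ?_
    obtain ⟨S, hS, hxS⟩ := (hV'c ▸ mem_univ (f x) : f x ∈ ⋃₀ V')
    exact ⟨f ⁻¹' S, ⟨⟨S, hS, rfl⟩, nonempty_iff_ne_empty.mp ⟨x, hxS⟩⟩, hxS⟩
  · rintro _ ⟨⟨S, hS, rfl⟩, hne⟩
    obtain ⟨x, hx⟩ := nonempty_iff_ne_empty.mpr hne
    obtain ⟨S', hS'G, hSS'⟩ := hV'G S hS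
    simp only [G, Finset.mem_insert, Finset.mem_image] at hS'G
    rcases hS'G with rfl | ⟨W, hW, rfl⟩
    · exact absurd (mem_range_self x) (hSS' hx)
    · exact ⟨W, hW, (preimage_mono (hSS'.trans interior_subset)).trans
        (subset_kernImage_iff.mp subset_rfl)⟩
  · calc {W ∈ (preimage f '' V') \ {∅} | x ∈ W}.encard
        ≤ (preimage f '' {S ∈ V' | f x ∈ S}).encard := by
          refine encard_mono ?_
          rintro _ ⟨⟨⟨S, hS, rfl⟩, -⟩, hx⟩
          exact ⟨S, ⟨hS, hx⟩, rfl⟩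
      _ ≤ {S ∈ V' | f x ∈ S}.encard := encard_image_le _ _
      _ ≤ n + 1 := hV'ord (f x)

abbrev InverseLimit {ι : Type*} [Preorder ι] {F : ι → Type*} (p : ∀ i j, i ≤ j → F j → F i) :=
  {x : ∀ i, F i // ∀ i j (h : i ≤ j), p i j h (x j) = x i}

namespace InverseLimit

variable {ι : Type*} [Preorder ι] {F : ι → Type*} (p : ∀ i j, i ≤ j → F j → F i)

def proj (j : ι) (x : InverseLimit p) : F j := x.1 j

theorem p_proj {i j : ι} (h : i ≤ j) (x : InverseLimit p) : p i j h (proj p j x) = proj p i x :=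
  x.2 i j h

variable [∀ i, TopologicalSpace (F i)]

theorem continuous_proj (j : ι) : Continuous (proj p j) :=
  (continuous_apply j).comp continuous_subtype_val

theorem compactSpace [∀ i, CompactSpace (F i)] [∀ i, T2Space (F i)]
    (hcont : ∀ i j (h : i ≤ j), Continuous (p i j h)) : CompactSpace (InverseLimit p) := by
  have hclosed : IsClosed {x : ∀ i, F i | ∀ i j (h : i ≤ j), p i j h (x j) = x i} := by
    simp only [ofPred_forall]
    exact isClosed_iInter fun i => isClosed_iInter fun j => isClosed_iInter fun h =>
      isClosed_eq ((hcont i j h).comp (continuous_apply j)) (continuous_apply i)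
  exact isCompact_iff_compactSpace.mp hclosed.isCompact

theorem nhds_eq_iInf_comap_proj (x : InverseLimit p) :
    𝓝 x = ⨅ i, comap (proj p i) (𝓝 (proj p i x)) := by
  rw [nhds_induced, nhds_pi, Filter.pi, comap_iInf]
  simp only [comap_comap]
  rfl

theorem comap_proj_nhds_antitone (hcont : ∀ i j (h : i ≤ j), Continuous (p i j h))
    (x : InverseLimit p) : Antitone fun i => comap (proj p i) (𝓝 (proj p i x)) := by
  intro i j h
  have hfactor : proj p i = p i j h ∘ proj p j := funext fun y => (p_proj p h y).symm
  simp only [hfactor, ← comap_comap, ← p_proj p h x]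
  exact comap_mono ((hcont i j h).tendsto (proj p j x)).le_comap

theorem exists_forall_mem_interior_kernImage_proj [IsDirected ι (· ≤ ·)] [Nonempty ι]
    [CompactSpace (InverseLimit p)] (hcont : ∀ i j (h : i ≤ j), Continuous (p i j h))
    (U : Finset (Set (InverseLimit p))) (hUo : ∀ W ∈ U, IsOpen W)
    (hUc : ⋃₀ (U : Set (Set (InverseLimit p))) = univ) :
    ∃ j, ∀ x, ∃ W ∈ U, proj p j x ∈ interior (kernImage (proj p j) W) := by
  set O : ι → Set (InverseLimit p) := fun j =>
    ⋃ W ∈ U, proj p j ⁻¹' interior (kernImage (proj p j) W)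
  have hmem : ∀ j x, x ∈ O j ↔ ∃ W ∈ U, W ∈ comap (proj p j) (𝓝 (proj p j x)) := by
    simp [O, mem_interior_kernImage_iff]
  have hOo : ∀ j, IsOpen (O j) := fun j =>
    isOpen_biUnion fun W _ => isOpen_interior.preimage (continuous_proj p j)
  have hOmono : Monotone O := fun i j h x hx => by
    obtain ⟨W, hW, hWi⟩ := (hmem i x).mp hx
    exact (hmem j x).mpr ⟨W, hW, comap_proj_nhds_antitone p hcont x h hWi⟩
  have hOc : univ ⊆ ⋃ j, O j := fun x _ => by
    obtain ⟨W, hW, hxW⟩ := (hUc ▸ mem_univ x : x ∈ ⋃₀ (U : Set (Set (InverseLimit p))))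
    have hWx : W ∈ 𝓝 x := (hUo W hW).mem_nhds hxW
    rw [nhds_eq_iInf_comap_proj,
      mem_iInf_of_directed (comap_proj_nhds_antitone p hcont x).directed_ge] at hWx
    obtain ⟨j, hj⟩ := hWx
    exact mem_iUnion.mpr ⟨j, (hmem j x).mpr ⟨W, hW, hj⟩⟩
  obtain ⟨j, hj⟩ := isCompact_univ.elim_directed_cover O hOo hOc hOmono.directed_le
  refine ⟨j, fun x => ?_⟩
  simpa [O] using hj (mem_univ x)

end InverseLimit

theorem stmt_17_general {ι : Type*} [Preorder ι] [IsDirected ι (· ≤ ·)]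
    (F : ι → Type*) [∀ i, TopologicalSpace (F i)] [∀ i, CompactSpace (F i)]
    [∀ i, T2Space (F i)]
    (p : ∀ i j, i ≤ j → F j → F i)
    (hcont : ∀ i j (h : i ≤ j), Continuous (p i j h))
    (d : ℕ) (hdim : ∀ i, CovDimLE (F i) d) :
    CovDimLE {x : ∀ i, F i // ∀ i j (h : i ≤ j), p i j h (x j) = x i} d := by
  rcases isEmpty_or_nonempty ι with hι | hι
  · have : Subsingleton (InverseLimit p) := ⟨fun x y => Subtype.ext (funext isEmptyElim)⟩
    exact CovDimLE.of_subsingleton _ d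
  have := InverseLimit.compactSpace p hcont
  intro U hUo hUc
  obtain ⟨j, hj⟩ := InverseLimit.exists_forall_mem_interior_kernImage_proj p hcont U hUo hUc
  have hπ := InverseLimit.continuous_proj p j
  exact (hdim j).exists_refinement_of_kernImage hπ (isCompact_range hπ).isClosed U hj

/-- The inverse limit of an inverse system of compact Hausdorff spaces of
covering dimension at most `d` has covering dimension at most `d`. -/
theorem stmt_17 {ι : Type*} [Preorder ι] [IsDirected ι (· ≤ ·)]
    (F : ι → Type*) [∀ i, TopologicalSpace (F i)] [∀ i, CompactSpace (F i)]
    [∀ i, T2Space (F i)]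
    (p : ∀ i j, i ≤ j → F j → F i)
    (hcont : ∀ i j (h : i ≤ j), Continuous (p i j h))
    (hid : ∀ i (x : F i), p i i le_rfl x = x)
    (hcomp : ∀ i j k (hij : i ≤ j) (hjk : j ≤ k) (x : F k),
      p i j hij (p j k hjk x) = p i k (hij.trans hjk) x)
    (d : ℕ) (hdim : ∀ i, CovDimLE (F i) d) :
    CovDimLE {x : ∀ i, F i // ∀ i j (h : i ≤ j), p i j h (x j) = x i} d :=
  stmt_17_general F p hcont d hdim
end

section
/- Let A = [[2,1],[1,1]] ∈ SL(2,ℤ), let p = (3+√5)/2 and 1/p be its eigenvalues with eigenvectors α, β ∈ ℝ², and for x ∈ ℝ² write x = a_x α + b_x β. Define σ on the semidirect product G = ℝ² ⋊_A ℤ (with multiplication (x,n)(y,m) = (Aᵐx + y, n+m)) into SL(2,ℝ) × SL(2,ℝ) by σ(x,n) = ( [[p^{-n/2}, a_x p^{-n/2}],[0, p^{n/2}]], [[p^{n/2}, b_x p^{n/2}],[0, p^{-n/2}]] ). Then σ is an injective group homomorphism. -/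
/-- The map `σ : ℝ² ⋊_A ℤ → M₂(ℝ) × M₂(ℝ)` defined by
`σ(x,n) = ([[p^{-n/2}, aₓ p^{-n/2}],[0, p^{n/2}]], [[p^{n/2}, bₓ p^{n/2}],[0, p^{-n/2}]])`,
where `aco x = aₓ` and `bco x = bₓ` are the coordinates of `x` in the eigenbasis. -/
noncomputable def sigmaMap (aco bco : (Fin 2 → ℝ) → ℝ) (p : ℝ)
    (z : (Fin 2 → ℝ) × ℤ) :
    Matrix (Fin 2) (Fin 2) ℝ × Matrix (Fin 2) (Fin 2) ℝ :=
  (!![(Real.sqrt p) ^ (-z.2), aco z.1 * (Real.sqrt p) ^ (-z.2);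
      0, (Real.sqrt p) ^ z.2],
   !![(Real.sqrt p) ^ z.2, bco z.1 * (Real.sqrt p) ^ z.2;
      0, (Real.sqrt p) ^ (-z.2)])

/-! Since `Aᵐ x = aₓ pᵐ α + (bₓ / pᵐ) β`, the product `(x,n)(y,m)` has coordinates
`aₓ pᵐ + a_y` and `bₓ p⁻ᵐ + b_y`. Multiplying the upper triangular matrices `σ(x,n) σ(y,m)`,
the diagonal of `σ(y,m)` rescales `aₓ` by `√p^(2m) = pᵐ` and `bₓ` by `p⁻ᵐ`, which is the
homomorphism property. For injectivity, the diagonal of `σ(x,n)` recovers `n` because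
`√p ≠ 1`, and the off-diagonal entries then recover `aₓ` and `bₓ`. -/

namespace Matrix

variable {n K : Type*} [Fintype n] [DecidableEq n] [Field K]

theorem zpow_mulVec_of_mulVec_eq_smul {A : Matrix n n K} (hA : IsUnit A.det) {v : n → K}
    {μ : K} (hμ : μ ≠ 0) (hv : A *ᵥ v = μ • v) (m : ℤ) : (A ^ m) *ᵥ v = μ ^ m • v := by
  have hinv : A⁻¹ *ᵥ v = μ⁻¹ • v := by
    rw [eq_inv_smul_iff₀ hμ, ← mulVec_smul, ← hv, mulVec_mulVec, nonsing_inv_mul A hA,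
      one_mulVec]
  induction m using Int.induction_on with
  | zero => simp
  | succ k ih =>
    rw [zpow_add_one hA, ← mulVec_mulVec, hv, mulVec_smul, ih, smul_smul, zpow_add_one₀ hμ,
      mul_comm]
  | pred k ih =>
    rw [zpow_sub_one hA, ← mulVec_mulVec, hinv, mulVec_smul, ih, smul_smul, zpow_sub_one₀ hμ,
      mul_comm]

theorem linearIndependent_pair_of_mulVec_eq_smul {A : Matrix n n K} {α β : n → K} {μ ν : K}
    (hμν : μ ≠ ν) (hα0 : α ≠ 0) (hβ0 : β ≠ 0) (hα : A *ᵥ α = μ • α) (hβ : A *ᵥ β = ν • β) :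
    LinearIndependent K ![α, β] := by
  refine Module.End.eigenvectors_linearIndependent' (toLin' A) ![μ, ν]
    (injective_pair_iff_ne.mpr hμν) _ fun i => ?_
  fin_cases i
  · exact ⟨Module.End.mem_eigenspace_iff.mpr (by simpa using hα), hα0⟩
  · exact ⟨Module.End.mem_eigenspace_iff.mpr (by simpa using hβ), hβ0⟩

theorem zpow_mulVec_add_eq_smul_add_smul {A : Matrix n n K} (hA : IsUnit A.det)
    {α β : n → K} {μ ν : K} (hμ : μ ≠ 0) (hν : ν ≠ 0) (hα : A *ᵥ α = μ • α)
    (hβ : A *ᵥ β = ν • β) {a b : (n → K) → K} (hdecomp : ∀ x, x = a x • α + b x • β)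
    (x y : n → K) (m : ℤ) :
    (A ^ m) *ᵥ x + y = (a x * μ ^ m + a y) • α + (b x * ν ^ m + b y) • β := by
  conv_lhs => rw [hdecomp x, hdecomp y]
  rw [mulVec_add, mulVec_smul, mulVec_smul, zpow_mulVec_of_mulVec_eq_smul hA hμ hα,
    zpow_mulVec_of_mulVec_eq_smul hA hν hβ]
  module

theorem upperTriangular_invDiag_mul (t u a b : K) :
    !![t⁻¹, a * t⁻¹; 0, t] * !![u⁻¹, b * u⁻¹; 0, u] =
      !![(t * u)⁻¹, (a * u ^ 2 + b) * (t * u)⁻¹; 0, t * u] := by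
  rcases eq_or_ne u 0 with rfl | hu
  · simp
  · ext i j
    fin_cases i <;> fin_cases j <;> simp [field, add_comm]

theorem upperTriangular_diagInv_mul (t u a b : K) :
    !![t, a * t; 0, t⁻¹] * !![u, b * u; 0, u⁻¹] =
      !![t * u, (a * (u ^ 2)⁻¹ + b) * (t * u); 0, (t * u)⁻¹] := by
  rcases eq_or_ne u 0 with rfl | hu
  · simp
  · ext i j
    fin_cases i <;> fin_cases j <;> simp [field, add_comm]

end Matrix

section sigmaMap

variable {aco bco : (Fin 2 → ℝ) → ℝ} {p : ℝ}

theorem sigmaMap_det (hp : 0 < p) (z : (Fin 2 → ℝ) × ℤ) :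
    (sigmaMap aco bco p z).1.det = 1 ∧ (sigmaMap aco bco p z).2.det = 1 := by
  have hs : Real.sqrt p ≠ 0 := (Real.sqrt_pos.mpr hp).ne'
  simp [sigmaMap, Matrix.det_fin_two_of, zpow_neg, zpow_ne_zero _ hs]

theorem sigmaMap_injective (hp : 0 < p) (hp1 : p ≠ 1)
    (hco : Function.Injective fun x => (aco x, bco x)) :
    Function.Injective (sigmaMap aco bco p) := by
  rintro ⟨x, n⟩ ⟨y, m⟩ h
  have hs : 0 < Real.sqrt p := Real.sqrt_pos.mpr hp
  have hs1 : Real.sqrt p ≠ 1 := by simpa [Real.sqrt_eq_one] using hp1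
  simp only [sigmaMap, Prod.mk.injEq] at h
  obtain rfl : n = m := zpow_right_injective₀ hs hs1 (by simpa using congr_fun₂ h.1 1 1)
  have ha : aco x = aco y :=
    mul_right_cancel₀ (zpow_ne_zero _ hs.ne') (by simpa using congr_fun₂ h.1 0 1)
  have hb : bco x = bco y :=
    mul_right_cancel₀ (zpow_ne_zero _ hs.ne') (by simpa using congr_fun₂ h.2 0 1)
  rw [hco (Prod.ext ha hb)]

theorem sigmaMap_mk_add_mul (hp : 0 < p) {x y x' : Fin 2 → ℝ} {n m : ℤ}
    (ha : aco x' = aco x * p ^ m + aco y) (hb : bco x' = bco x * p⁻¹ ^ m + bco y) :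
    sigmaMap aco bco p (x', n + m) = sigmaMap aco bco p (x, n) * sigmaMap aco bco p (y, m) := by
  have hs : Real.sqrt p ≠ 0 := (Real.sqrt_pos.mpr hp).ne'
  have hpow : p ^ m = (Real.sqrt p ^ m) ^ 2 := by
    rw [← zpow_natCast, ← zpow_mul, mul_comm, zpow_mul, zpow_natCast, Real.sq_sqrt hp.le]
  simp only [sigmaMap, Prod.mk_mul_mk, zpow_neg, Matrix.upperTriangular_invDiag_mul,
    Matrix.upperTriangular_diagInv_mul, zpow_add₀ hs, ha, hb, hpow, inv_zpow']

end sigmaMap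

/-- For `A = [[2,1],[1,1]]` with eigenvalues `p = (3+√5)/2` and `1/p`,
eigenvectors `α, β`, and coordinates `x = aₓ α + bₓ β`, the map `σ` is an
injective group homomorphism of `G = ℝ² ⋊_A ℤ` (with multiplication
`(x,n)(y,m) = (Aᵐ x + y, n + m)`) into `SL(2,ℝ) × SL(2,ℝ)`. -/
theorem stmt_18 (α β : Fin 2 → ℝ) (hα0 : α ≠ 0) (hβ0 : β ≠ 0)
    (hα : (!![2, 1; 1, 1] : Matrix (Fin 2) (Fin 2) ℝ).mulVec α =
      ((3 + Real.sqrt 5) / 2) • α)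
    (hβ : (!![2, 1; 1, 1] : Matrix (Fin 2) (Fin 2) ℝ).mulVec β =
      ((3 + Real.sqrt 5) / 2)⁻¹ • β)
    (aco bco : (Fin 2 → ℝ) → ℝ)
    (hdecomp : ∀ x : Fin 2 → ℝ, x = aco x • α + bco x • β) :
    (∀ z : (Fin 2 → ℝ) × ℤ,
      (sigmaMap aco bco ((3 + Real.sqrt 5) / 2) z).1.det = 1 ∧
      (sigmaMap aco bco ((3 + Real.sqrt 5) / 2) z).2.det = 1) ∧
    Function.Injective (sigmaMap aco bco ((3 + Real.sqrt 5) / 2)) ∧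
    ∀ (x y : Fin 2 → ℝ) (n m : ℤ),
      sigmaMap aco bco ((3 + Real.sqrt 5) / 2)
          (((!![2, 1; 1, 1] : Matrix (Fin 2) (Fin 2) ℝ) ^ m).mulVec x + y, n + m) =
        sigmaMap aco bco ((3 + Real.sqrt 5) / 2) (x, n) *
          sigmaMap aco bco ((3 + Real.sqrt 5) / 2) (y, m) := by
  have hp : 1 < (3 + Real.sqrt 5) / 2 := by have := Real.sqrt_nonneg 5; linarith
  have hp0 : 0 < (3 + Real.sqrt 5) / 2 := one_pos.trans hp
  have hA : IsUnit (!![2, 1; 1, 1] : Matrix (Fin 2) (Fin 2) ℝ).det := by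
    norm_num [Matrix.det_fin_two_of]
  have hli : LinearIndependent ℝ ![α, β] :=
    Matrix.linearIndependent_pair_of_mulVec_eq_smul
      ((inv_lt_one_of_one_lt₀ hp).trans hp).ne' hα0 hβ0 hα hβ
  refine ⟨sigmaMap_det hp0, sigmaMap_injective hp0 hp.ne' fun x y hxy => ?_, fun x y n m => ?_⟩
  · obtain ⟨ha, hb⟩ : aco x = aco y ∧ bco x = bco y := Prod.ext_iff.mp hxy
    rw [hdecomp x, hdecomp y, ha, hb]
  · obtain ⟨ha, hb⟩ := hli.eq_of_pair <| (hdecomp _).symm.trans <|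
      Matrix.zpow_mulVec_add_eq_smul_add_smul hA hp0.ne' (inv_ne_zero hp0.ne') hα hβ hdecomp
        x y m
    exact sigmaMap_mk_add_mul hp0 ha hb
end
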